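/- Let k be a field, α ∈ k nonzero, B = B_α = k[X₁,X₂,X₃,X₄]/(αX₁X₃+X₂X₃, X₁X₄+X₂X₄, X₃², X₄², X₁², X₂², X₃X₄), and for an integer q let T_q = B/(x₁−x₂, x₁−α^q x₃, x₁−x₄). Let d̄_i : T_q² → T_q² be given by the matrix [[x̄₁, α^{i−q}x̄₁],[x̄₁, x̄₁]] induced by reducing [[x₁, αⁱx₃],[x₄, x₂]] modulo the defining ideal of T_q. Then dim_k(im d̄_i) = 1 if α^{i−q} = 1, and dim_k(im d̄_i) = 2 otherwise. -/

import Mathlib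

set_option synthInstance.maxHeartbeats 1000000
set_option maxHeartbeats 2000000

open MvPolynomial in
/-- `B = B_α = k[X₁,…,X₄]/(αX₁X₃+X₂X₃, X₁X₄+X₂X₄, X₃², X₄², X₁², X₂², X₃X₄)`. -/
noncomputable abbrev GPB4 (k : Type) [Field k] (α : k) : Type :=
  MvPolynomial (Fin 4) k ⧸ (Ideal.span {C α * X 0 * X 2 + X 1 * X 2,
    X 0 * X 3 + X 1 * X 3, X 2 ^ 2, X 3 ^ 2, X 0 ^ 2, X 1 ^ 2, X 2 * X 3} :
      Ideal (MvPolynomial (Fin 4) k))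

/-- The residue class of `X i` in `B_α`. -/
noncomputable def b4x {k : Type} [Field k] (α : k) (i : Fin 4) : GPB4 k α :=
  Ideal.Quotient.mk _ (MvPolynomial.X i)

/-- `T_q = B/(x₁ − x₂, x₁ − α^q x₃, x₁ − x₄)`. -/
noncomputable abbrev TqB (k : Type) [Field k] (α : k) (q : ℤ) : Type :=
  GPB4 k α ⧸ Ideal.span {b4x α 0 - b4x α 1,
    b4x α 0 - algebraMap k (GPB4 k α) (α ^ q) * b4x α 2, b4x α 0 - b4x α 3}

/-- The image `x̄₁` of `x₁` in `T_q`. -/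
noncomputable def tqx1 {k : Type} [Field k] (α : k) (q : ℤ) : TqB k α q :=
  Ideal.Quotient.mk _ (b4x α 0)

/-!
In `T_q` every variable is a scalar multiple of `x̄₁` and `x̄₁² = 0`, so `x̄₁ T_q = k x̄₁`;
`x̄₁ ≠ 0` because `T_q` maps onto the dual numbers with `x̄₁ ↦ ε`. Hence a matrix with entries
`c_{jl} x̄₁` (`c_{jl} ∈ k`) has image `{w x̄₁ : w ∈ im c}`, of `k`-dimension `rank c`.
For `c = [[1, α^{i−q}], [1, 1]]` that rank is `1` or `2` according to whether
`det c = 1 − α^{i−q}` vanishes.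
-/

theorem Ideal.map_eq_zero_of_mem_span {R S F : Type*} [Semiring R] [Semiring S] [FunLike F R S]
    [RingHomClass F R S] {f : F} {s : Set R} (hs : ∀ a ∈ s, f a = 0) {a : R}
    (ha : a ∈ Ideal.span s) : f a = 0 :=
  Ideal.span_le (I := RingHom.ker f).mpr hs ha

open MvPolynomial in
theorem MvPolynomial.mul_algHom_eq_constantCoeff_smul {σ k A : Type*} [CommSemiring k]
    [Semiring A] [Algebra k A] (f : MvPolynomial σ k →ₐ[k] A) {x : A}
    (hx : ∀ n, x * f (X n) = 0) (p : MvPolynomial σ k) : x * f p = constantCoeff p • x := by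
  induction p using MvPolynomial.induction_on with
  | C a => rw [← algebraMap_eq, AlgHom.commutes, ← Algebra.commutes, ← Algebra.smul_def,
      algebraMap_eq, constantCoeff_C]
  | add p r hp hr => rw [map_add, mul_add, hp, hr, map_add, add_smul]
  | mul_X p n hp => rw [map_mul, ← mul_assoc, hp, smul_mul_assoc, hx, smul_zero, map_mul,
      constantCoeff_X, mul_zero, zero_smul]

namespace Matrix

/- Stated for `[Module k A]` with scalar-tower assumptions rather than `[Algebra k A]`: on the
iterated quotient `TqB` instance search finds a `k`-module structure (`Submodule.Quotient.module'`)
that Lean does not unify with `Algebra.toModule`. -/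
theorem range_toLin'_map_smul {k A : Type*} [CommSemiring k] [CommSemiring A] [Module k A]
    [IsScalarTower k A A] [SMulCommClass k A A] {m n : Type*} [Fintype n] [DecidableEq n] {x : A}
    (hx : ∀ t, x * t ∈ k ∙ x) (c : Matrix m n k) :
    (LinearMap.range (toLin' (c.map (· • x)))).restrictScalars k =
      (LinearMap.range (toLin' c)).map ((LinearMap.toSpanSingleton k A x).compLeft m) := by
  have hmulVec (u : n → A) (a : n → k) (ha : ∀ j, x * u j = a j • x) :
      toLin' (c.map (· • x)) u = (LinearMap.toSpanSingleton k A x).compLeft m (c *ᵥ a) := by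
    ext i
    simp [mulVec, dotProduct, smul_mul_assoc, ha, smul_smul]
  ext y
  simp only [Submodule.restrictScalars_mem, LinearMap.mem_range, Submodule.mem_map]
  constructor
  · rintro ⟨u, rfl⟩
    choose a ha using fun j => Submodule.mem_span_singleton.mp (hx (u j))
    exact ⟨_, ⟨a, rfl⟩, (hmulVec u a fun j => (ha j).symm).symm⟩
  · rintro ⟨_, ⟨a, rfl⟩, rfl⟩
    exact ⟨fun j => a j • 1, hmulVec _ a fun j => by rw [mul_smul_comm, mul_one]⟩

theorem finrank_range_toLin'_map_smul {k A : Type*} [Field k] [CommRing A] [Module k A]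
    [IsScalarTower k A A] [SMulCommClass k A A] {m n : Type*} [Fintype n] [DecidableEq n] {x : A}
    (hx0 : x ≠ 0) (hx : ∀ t, x * t ∈ k ∙ x) (c : Matrix m n k) :
    Module.finrank k ((LinearMap.range (toLin' (c.map (· • x)))).restrictScalars k) = c.rank := by
  have hinj : Function.Injective ((LinearMap.toSpanSingleton k A x).compLeft m) :=
    fun u v huv => funext fun i => smul_left_injective k hx0 (congrFun huv i)
  rw [range_toLin'_map_smul hx, ← LinearEquiv.finrank_eq (Submodule.equivMapOfInjective _ hinj _),
    rank, toLin'_apply']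

theorem rank_fin_two_ones {k : Type*} [Field k] :
    (!![1, 1; 1, 1] : Matrix (Fin 2) (Fin 2) k).rank = 1 := by
  have hcol : (!![1, 1; 1, 1] : Matrix (Fin 2) (Fin 2) k).col = fun _ => ![1, 1] := by
    ext j i
    fin_cases i <;> fin_cases j <;> rfl
  rw [rank_eq_finrank_span_cols, hcol, Set.range_const, finrank_span_singleton]
  simp

theorem rank_fin_two_of_ne_one {k : Type*} [Field k] {β : k} (hβ : β ≠ 1) :
    (!![1, β; 1, 1] : Matrix (Fin 2) (Fin 2) k).rank = 2 := by
  rw [rank_of_det_ne_zero, Fintype.card_fin]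
  rwa [det_fin_two_of, mul_one, mul_one, sub_ne_zero, ne_comm]

end Matrix

namespace TqB

open MvPolynomial

variable {k : Type} [Field k] (α : k) (q : ℤ)

noncomputable def mkₐ : MvPolynomial (Fin 4) k →ₐ[k] TqB k α q :=
  (Ideal.Quotient.mkₐ k _).comp (Ideal.Quotient.mkₐ k _)

theorem mkₐ_surjective : Function.Surjective (mkₐ α q) :=
  (Ideal.Quotient.mkₐ_surjective k _).comp (Ideal.Quotient.mkₐ_surjective k _)

theorem mkₐ_X_zero : mkₐ α q (X 0) = tqx1 α q := rfl

theorem mkₐ_eq_zero_of_mem_relations {p : MvPolynomial (Fin 4) k}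
    (hp : p ∈ ({C α * X 0 * X 2 + X 1 * X 2, X 0 * X 3 + X 1 * X 3, X 2 ^ 2, X 3 ^ 2, X 0 ^ 2,
      X 1 ^ 2, X 2 * X 3} : Set (MvPolynomial (Fin 4) k))) : mkₐ α q p = 0 := by
  show Ideal.Quotient.mk _ (Ideal.Quotient.mk _ p) = 0
  rw [Ideal.Quotient.eq_zero_iff_mem.mpr (Ideal.subset_span hp), map_zero]

theorem mk_eq_zero_of_mem_relations {b : GPB4 k α}
    (hb : b ∈ ({b4x α 0 - b4x α 1, b4x α 0 - algebraMap k (GPB4 k α) (α ^ q) * b4x α 2,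
      b4x α 0 - b4x α 3} : Set (GPB4 k α))) : (Ideal.Quotient.mk _ b : TqB k α q) = 0 :=
  Ideal.Quotient.eq_zero_iff_mem.mpr (Ideal.subset_span hb)

theorem mkₐ_X_one : mkₐ α q (X 1) = tqx1 α q := by
  have h : (Ideal.Quotient.mk _ (b4x α 0 - b4x α 1) : TqB k α q) = 0 :=
    mk_eq_zero_of_mem_relations α q (by simp)
  rw [map_sub, sub_eq_zero] at h
  exact h.symm

theorem mkₐ_X_three : mkₐ α q (X 3) = tqx1 α q := by
  have h : (Ideal.Quotient.mk _ (b4x α 0 - b4x α 3) : TqB k α q) = 0 :=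
    mk_eq_zero_of_mem_relations α q (by simp)
  rw [map_sub, sub_eq_zero] at h
  exact h.symm

theorem tqx1_eq_smul_mkₐ_X_two : tqx1 α q = α ^ q • mkₐ α q (X 2) := by
  have h : (Ideal.Quotient.mk _ (b4x α 0 - algebraMap k (GPB4 k α) (α ^ q) * b4x α 2) :
      TqB k α q) = 0 := mk_eq_zero_of_mem_relations α q (by simp)
  rw [map_sub, map_mul, sub_eq_zero, Ideal.Quotient.mk_algebraMap] at h
  exact h.trans (Algebra.smul_def _ _).symm

theorem mkₐ_X_mul_self (n : Fin 4) : mkₐ α q (X n) * mkₐ α q (X n) = 0 := by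
  rw [← map_mul, ← sq]
  fin_cases n <;> exact mkₐ_eq_zero_of_mem_relations α q (by simp)

theorem tqx1_mul_mkₐ_X (n : Fin 4) : tqx1 α q * mkₐ α q (X n) = 0 :=
  match n with
  | 0 => by rw [← mkₐ_X_zero, mkₐ_X_mul_self]
  | 1 => by rw [← mkₐ_X_one, mkₐ_X_mul_self]
  | 2 => by rw [tqx1_eq_smul_mkₐ_X_two, smul_mul_assoc, mkₐ_X_mul_self, smul_zero]
  | 3 => by rw [← mkₐ_X_three, mkₐ_X_mul_self]

theorem tqx1_mul_mem_span (t : TqB k α q) : tqx1 α q * t ∈ k ∙ tqx1 α q := by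
  obtain ⟨p, rfl⟩ := mkₐ_surjective α q t
  rw [mul_algHom_eq_constantCoeff_smul _ (tqx1_mul_mkₐ_X α q)]
  exact Submodule.smul_mem _ _ (Submodule.mem_span_singleton_self _)

open DualNumber in
noncomputable def toDualNumber (hα : α ≠ 0) : TqB k α q →ₐ[k] DualNumber k :=
  let f : GPB4 k α →ₐ[k] DualNumber k :=
    Ideal.Quotient.liftₐ _ (aeval ![ε, ε, (α ^ q)⁻¹ • ε, ε]) fun _ =>
      Ideal.map_eq_zero_of_mem_span fun p hp => by
        simp only [Set.mem_insert_iff, Set.mem_singleton_iff] at hp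
        rcases hp with rfl | rfl | rfl | rfl | rfl | rfl | rfl <;> simp [sq, mul_assoc]
  have hf (n : Fin 4) : f (b4x α n) = ![ε, ε, (α ^ q)⁻¹ • ε, ε] n := aeval_X _ n
  Ideal.Quotient.liftₐ _ f fun _ =>
    Ideal.map_eq_zero_of_mem_span fun b hb => by
      simp only [Set.mem_insert_iff, Set.mem_singleton_iff] at hb
      rcases hb with rfl | rfl | rfl <;>
        simp [hf, ← Algebra.smul_def, smul_smul, zpow_ne_zero q hα]

theorem toDualNumber_tqx1 (hα : α ≠ 0) : toDualNumber α q hα (tqx1 α q) = DualNumber.eps := by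
  show aeval _ (X 0) = _
  simp

theorem tqx1_ne_zero (hα : α ≠ 0) : tqx1 α q ≠ 0 := fun h => by
  have := congrArg TrivSqZeroExt.snd (toDualNumber_tqx1 α q hα)
  simp [h] at this

end TqB

/-- The matrix `d̄_i = [[x̄₁, α^{i−q}x̄₁],[x̄₁, x̄₁]]` over `T_q`, obtained by reducing
`[[x₁, αⁱx₃],[x₄, x₂]]` modulo the defining ideal of `T_q`. Its image in `T_q²` has
`k`-dimension `1` if `α^{i−q} = 1`, and `2` otherwise. -/
theorem stmt19 (k : Type) [Field k] (α : k) (hα : α ≠ 0) (q i : ℤ) :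
    let d : Matrix (Fin 2) (Fin 2) (TqB k α q) :=
      !![tqx1 α q, (algebraMap k (TqB k α q) : k →+* TqB k α q) (α ^ (i - q)) * tqx1 α q;
         tqx1 α q, tqx1 α q];
    (α ^ (i - q) = 1 →
      Module.finrank k ((LinearMap.range (Matrix.toLin' d)).restrictScalars k) = 1) ∧
    (α ^ (i - q) ≠ 1 →
      Module.finrank k ((LinearMap.range (Matrix.toLin' d)).restrictScalars k) = 2) := by
  intro d
  have hd : d = (!![1, α ^ (i - q); 1, 1] : Matrix (Fin 2) (Fin 2) k).map (· • tqx1 α q) := by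
    ext a b
    fin_cases a <;> fin_cases b
    · simp [d]
    · exact (Algebra.smul_def (α ^ (i - q)) (tqx1 α q)).symm
    · simp [d]
    · simp [d]
  have hrank := Matrix.finrank_range_toLin'_map_smul (x := tqx1 α q) (TqB.tqx1_ne_zero α q hα)
    (TqB.tqx1_mul_mem_span α q) !![1, α ^ (i - q); 1, 1]
  rw [hd]
  refine ⟨fun h => ?_, fun h => ?_⟩
  · rw [hrank, h]
    exact Matrix.rank_fin_two_ones
  · rw [hrank]
    exact Matrix.rank_fin_two_of_ne_one h
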